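/- Let (A,B) be a system and let D = (u,x) be input-state data of length T consistent with (A,B). Then the following are equivalent: (i) the column span of the stacked (n+m)×T matrix [X_-; U_-] equals {(ξ,η) ∈ ℝ^n×ℝ^m : ξ ∈ R(A,[B x(0)])}, where [B x(0)] is the n×(m+1) matrix obtained by appending x(0) to B; (ii) the column span of [X_-; U_-] equals {(ξ,η) ∈ ℝ^n×ℝ^m : ξ ∈ column span of X_-} and the column span of X_+ is contained in the column span of X_-. -/

import Mathlib

open Matrix

/-- A system: a pair `(A, B)` of real matrices of sizes `n × n` and `n × m`. -/
abbrev Sys (n m : ℕ) := Matrix (Fin n) (Fin n) ℝ × Matrix (Fin n) (Fin m) ℝ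

/-- `(A, B)` is consistent with the input-state data `(u, x)` of length `T`. -/
def Consistent {n m T : ℕ} (A : Matrix (Fin n) (Fin n) ℝ) (B : Matrix (Fin n) (Fin m) ℝ)
    (u : Fin T → Fin m → ℝ) (x : Fin (T + 1) → Fin n → ℝ) : Prop :=
  ∀ t : Fin T, x t.succ = A.mulVec (x t.castSucc) + B.mulVec (u t)

/-- The set `Σ_D` of systems consistent with the data `(u, x)`. -/
def SigmaD {n m T : ℕ} (u : Fin T → Fin m → ℝ) (x : Fin (T + 1) → Fin n → ℝ) :
    Set (Sys n m) :=
  {AB | Consistent AB.1 AB.2 u x}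

/-- The matrix `X₋ = [x(0) ⋯ x(T-1)]`. -/
def Xminus {n T : ℕ} (x : Fin (T + 1) → Fin n → ℝ) : Matrix (Fin n) (Fin T) ℝ :=
  Matrix.of fun i t => x t.castSucc i

/-- The matrix `X₊ = [x(1) ⋯ x(T)]`. -/
def Xplus {n T : ℕ} (x : Fin (T + 1) → Fin n → ℝ) : Matrix (Fin n) (Fin T) ℝ :=
  Matrix.of fun i t => x t.succ i

/-- The matrix `U₋ = [u(0) ⋯ u(T-1)]`. -/
def Uminus {m T : ℕ} (u : Fin T → Fin m → ℝ) : Matrix (Fin m) (Fin T) ℝ :=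
  Matrix.of fun i t => u t i

/-- The stacked matrix `[X₋; U₋]`. -/
def stacked {n m T : ℕ} (X : Matrix (Fin n) (Fin T) ℝ) (U : Matrix (Fin m) (Fin T) ℝ) :
    Matrix (Fin n ⊕ Fin m) (Fin T) ℝ :=
  Matrix.fromRows X U

/-- A real square matrix is Schur if all its complex eigenvalues have modulus `< 1`. -/
def Schur {n : ℕ} (M : Matrix (Fin n) (Fin n) ℝ) : Prop :=
  ∀ μ ∈ spectrum ℂ (M.map ((↑·) : ℝ → ℂ)), ‖μ‖ < 1

/-- The matrix `[C  AC  ⋯  A^{n-1}C]`. -/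
def reachMat {n : ℕ} (A : Matrix (Fin n) (Fin n) ℝ) {p : Type*} (C : Matrix (Fin n) p ℝ) :
    Matrix (Fin n) (Fin n × p) ℝ :=
  Matrix.of fun i q => (A ^ (q.1 : ℕ) * C) i q.2

/-- The column span of a matrix, as a submodule. -/
def colSpan {p : Type*} {q : Type*} [Fintype q] (M : Matrix p q ℝ) :
    Submodule ℝ (p → ℝ) :=
  LinearMap.range M.mulVecLin

/-- The reachable subspace `R(A, C)`: the column span of `[C AC ⋯ A^{n-1}C]`. -/
def Rspace {n : ℕ} (A : Matrix (Fin n) (Fin n) ℝ) {p : Type*} [Fintype p]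
    (C : Matrix (Fin n) p ℝ) : Submodule ℝ (Fin n → ℝ) :=
  colSpan (reachMat A C)

/-- `(A, B)` is controllable. -/
def Controllable {n m : ℕ} (A : Matrix (Fin n) (Fin n) ℝ) (B : Matrix (Fin n) (Fin m) ℝ) :
    Prop :=
  (reachMat A B).rank = n

/-- `(A, B)` is stabilizable. -/
def Stabilizable {n m : ℕ} (A : Matrix (Fin n) (Fin n) ℝ) (B : Matrix (Fin n) (Fin m) ℝ) :
    Prop :=
  ∃ K : Matrix (Fin m) (Fin n) ℝ, Schur (A + B * K)

/-- The set `Σ_cont` of controllable systems. -/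
def SigmaCont (n m : ℕ) : Set (Sys n m) := {AB | Controllable AB.1 AB.2}

/-- The set `Σ_stab` of stabilizable systems. -/
def SigmaStab (n m : ℕ) : Set (Sys n m) := {AB | Stabilizable AB.1 AB.2}

/-- Data `(u, x)` is `P`-informative for identification: `Σ_D ∩ P` is a singleton. -/
def InfId {n m T : ℕ} (P : Set (Sys n m)) (u : Fin T → Fin m → ℝ)
    (x : Fin (T + 1) → Fin n → ℝ) : Prop :=
  ∃ s : Sys n m, SigmaD u x ∩ P = {s}

/-- Data `(u, x)` is `P`-informative for stabilization. -/
def InfStab {n m T : ℕ} (P : Set (Sys n m)) (u : Fin T → Fin m → ℝ)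
    (x : Fin (T + 1) → Fin n → ℝ) : Prop :=
  ∃ K : Matrix (Fin m) (Fin n) ℝ, ∀ AB ∈ SigmaD u x ∩ P, Schur (AB.1 + AB.2 * K)

/-- An input is `P`-universal for identification. -/
def UnivId {n m T : ℕ} (P : Set (Sys n m)) (u : Fin T → Fin m → ℝ) : Prop :=
  ∀ AB ∈ P, ∀ x : Fin (T + 1) → Fin n → ℝ, Consistent AB.1 AB.2 u x → InfId P u x

/-- An input is `P`-universal for stabilization. -/
def UnivStab {n m T : ℕ} (P : Set (Sys n m)) (u : Fin T → Fin m → ℝ) : Prop :=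
  ∀ AB ∈ P, ∀ x : Fin (T + 1) → Fin n → ℝ, Consistent AB.1 AB.2 u x → InfStab P u x

/-- The Hankel matrix of depth `k` of the input sequence `u`. -/
def Hankel {m T : ℕ} (u : Fin T → Fin m → ℝ) (k : ℕ) :
    Matrix (Fin k × Fin m) (Fin (T + 1 - k)) ℝ :=
  Matrix.of fun q i =>
    u ⟨i.val + q.1.val, by have h1 := i.isLt; have h2 := q.1.isLt; omega⟩ q.2

/-- The input sequence `u` is persistently exciting of order `k`. -/
def PE {m T : ℕ} (u : Fin T → Fin m → ℝ) (k : ℕ) : Prop :=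
  (Hankel u k).rank = k * m

/-- The matrix `[B  x₀]` obtained by appending the column `x₀` to `B`. -/
def augCol {n m : ℕ} (B : Matrix (Fin n) (Fin m) ℝ) (x0 : Fin n → ℝ) :
    Matrix (Fin n) (Fin m ⊕ Fin 1) ℝ :=
  Matrix.fromCols B (Matrix.of fun i _ => x0 i)

/-- Precomposition with `Sum.inl`, extracting the `ℝ^n`-component of a vector in
`ℝ^n × ℝ^m ≃ (Fin n ⊕ Fin m) → ℝ`. -/
def projN (n m : ℕ) : ((Fin n ⊕ Fin m) → ℝ) →ₗ[ℝ] (Fin n → ℝ) :=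
  LinearMap.funLeft ℝ ℝ Sum.inl

/-!
By Cayley–Hamilton, `R(A, C)` is the smallest `A`-invariant subspace containing the columns of
`C`. Consistency then puts every state in `R := R(A, [B x(0)])`, so `im X₋ ⊆ R`. Under (i),
projecting `im [X₋; U₋]` to `ℝ^n` gives `im X₋ = R`, and `X₊` has its columns in `R`. Under (ii),
`X₊ = A X₋ + B U₋` shows `A ξ + B η ∈ im X₋` for all `ξ ∈ im X₋` and all `η`; so `im X₋` is
`A`-invariant, contains `im B`, and contains `x(0)` because `m > 0` forces `T > 0`. Hence `R ⊆ im X₋`.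
-/

section ColumnSpan

variable {p q : Type*} [Fintype q]

lemma colSpan_le_iff (M : Matrix p q ℝ) (W : Submodule ℝ (p → ℝ)) :
    colSpan M ≤ W ↔ ∀ j, Mᵀ j ∈ W := by
  rw [colSpan, Matrix.range_mulVecLin, Submodule.span_le, Set.range_subset_iff]
  rfl

lemma colSpan_augCol_le_iff {n m : ℕ} (B : Matrix (Fin n) (Fin m) ℝ) (x0 : Fin n → ℝ)
    (W : Submodule ℝ (Fin n → ℝ)) :
    colSpan (augCol B x0) ≤ W ↔ colSpan B ≤ W ∧ x0 ∈ W := by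
  simp only [colSpan_le_iff, augCol, Matrix.transpose_fromCols, Sum.forall, Fin.forall_fin_one]
  rfl

end ColumnSpan

lemma Matrix.pow_mem_span_pow_lt {R : Type*} [CommRing R] [Nontrivial R] {n : ℕ}
    (A : Matrix (Fin n) (Fin n) R) (k : ℕ) :
    A ^ k ∈ Submodule.span R (Set.range fun l : Fin n => A ^ (l : ℕ)) := by
  rcases Nat.eq_zero_or_pos n with rfl | hn
  · rw [Subsingleton.elim (A ^ k) 0]
    exact zero_mem _
  have hdeg : (Polynomial.X ^ k %ₘ A.charpoly).natDegree < n := by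
    by_cases h1 : A.charpoly = 1
    · simp [h1, hn]
    simpa using Polynomial.natDegree_modByMonic_lt (Polynomial.X ^ k) A.charpoly_monic h1
  rw [Matrix.pow_eq_aeval_mod_charpoly, Polynomial.aeval_eq_sum_range' hdeg,
    ← Fin.sum_univ_eq_sum_range]
  exact Submodule.sum_mem _ fun l _ => Submodule.smul_mem _ _ (Submodule.subset_span ⟨l, rfl⟩)

section Reachable

variable {n : ℕ} {p : Type*} [Fintype p] (A : Matrix (Fin n) (Fin n) ℝ) (C : Matrix (Fin n) p ℝ)

omit [Fintype p] in
lemma mul_transpose_apply (M : Matrix (Fin n) p ℝ) (j : p) : (A * M)ᵀ j = A *ᵥ Mᵀ j := rfl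

lemma Rspace_eq_span :
    Rspace A C = Submodule.span ℝ (Set.range fun q : Fin n × p => (A ^ (q.1 : ℕ) * C)ᵀ q.2) :=
  Matrix.range_mulVecLin _

lemma Rspace_le {W : Submodule ℝ (Fin n → ℝ)} (hA : ∀ w ∈ W, A *ᵥ w ∈ W)
    (hC : colSpan C ≤ W) : Rspace A C ≤ W := by
  rw [Rspace_eq_span, Submodule.span_le, Set.range_subset_iff]
  intro q
  induction (q.1 : ℕ) with
  | zero =>
    simpa only [pow_zero, Matrix.one_mul, SetLike.mem_coe] using (colSpan_le_iff C W).1 hC q.2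
  | succ l ih => rw [pow_succ', Matrix.mul_assoc, mul_transpose_apply]; exact hA _ ih

lemma pow_mul_transpose_mem_Rspace (k : ℕ) (j : p) : (A ^ k * C)ᵀ j ∈ Rspace A C := by
  refine Submodule.span_induction (p := fun M _ => (M * C)ᵀ j ∈ Rspace A C) ?_ ?_ ?_ ?_
    (A.pow_mem_span_pow_lt k)
  · rintro _ ⟨l, rfl⟩
    rw [Rspace_eq_span]
    exact Submodule.subset_span ⟨(l, j), rfl⟩
  · rw [Matrix.zero_mul]
    exact zero_mem _
  · intro M N _ _ hM hN
    rw [Matrix.add_mul]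
    exact add_mem hM hN
  · intro c M _ hM
    rw [Matrix.smul_mul]
    exact Submodule.smul_mem _ c hM

lemma colSpan_le_Rspace : colSpan C ≤ Rspace A C :=
  (colSpan_le_iff C _).2 fun j => by simpa using pow_mul_transpose_mem_Rspace A C 0 j

lemma mulVec_mem_Rspace {w : Fin n → ℝ} (hw : w ∈ Rspace A C) : A *ᵥ w ∈ Rspace A C := by
  suffices Rspace A C ≤ (Rspace A C).comap A.mulVecLin from this hw
  nth_rw 1 [Rspace_eq_span]
  rw [Submodule.span_le, Set.range_subset_iff]
  rintro ⟨l, j⟩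
  rw [SetLike.mem_coe, Submodule.mem_comap, Matrix.mulVecLin_apply, ← mul_transpose_apply,
    ← Matrix.mul_assoc, ← pow_succ']
  exact pow_mul_transpose_mem_Rspace A C _ j

end Reachable

section Data

variable {n m T : ℕ}

lemma stacked_mulVec (X : Matrix (Fin n) (Fin T) ℝ) (U : Matrix (Fin m) (Fin T) ℝ)
    (v : Fin T → ℝ) : stacked X U *ᵥ v = Sum.elim (X *ᵥ v) (U *ᵥ v) := by
  ext (i | i) <;> rfl

lemma map_projN_colSpan_stacked (X : Matrix (Fin n) (Fin T) ℝ) (U : Matrix (Fin m) (Fin T) ℝ) :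
    (colSpan (stacked X U)).map (projN n m) = colSpan X := by
  rw [colSpan, colSpan, ← LinearMap.range_comp]
  rfl

lemma exists_mulVec_eq_of_colSpan_stacked_eq {X : Matrix (Fin n) (Fin T) ℝ}
    {U : Matrix (Fin m) (Fin T) ℝ} (h : colSpan (stacked X U) = (colSpan X).comap (projN n m))
    {ξ : Fin n → ℝ} (hξ : ξ ∈ colSpan X) (η : Fin m → ℝ) :
    ∃ v, X *ᵥ v = ξ ∧ U *ᵥ v = η := by
  have hmem : Sum.elim ξ η ∈ colSpan (stacked X U) := h ▸ hξ
  obtain ⟨v, hv⟩ := hmem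
  rw [Matrix.mulVecLin_apply, stacked_mulVec] at hv
  exact ⟨v, funext fun i => congrFun hv (.inl i), funext fun i => congrFun hv (.inr i)⟩

-- with `T = 0` the span is `0`, which is not `im X × ℝ^m` when `m > 0`
lemma pos_of_colSpan_stacked_eq {X : Matrix (Fin n) (Fin T) ℝ} {U : Matrix (Fin m) (Fin T) ℝ}
    (hm : 0 < m) (h : colSpan (stacked X U) = (colSpan X).comap (projN n m)) : 0 < T := by
  have : Nonempty (Fin m) := ⟨⟨0, hm⟩⟩
  obtain ⟨η, hη⟩ := exists_ne (0 : Fin m → ℝ)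
  obtain ⟨v, -, hv⟩ := exists_mulVec_eq_of_colSpan_stacked_eq h (zero_mem _) η
  refine Nat.pos_of_ne_zero fun hT0 => hη ?_
  subst hT0
  rw [← hv, Subsingleton.elim v 0, Matrix.mulVec_zero]

lemma x_zero_mem_colSpan_Xminus (x : Fin (T + 1) → Fin n → ℝ) (hT : 0 < T) :
    x 0 ∈ colSpan (Xminus x) := by
  obtain ⟨T, rfl⟩ := Nat.exists_eq_add_one_of_ne_zero hT.ne'
  exact (colSpan_le_iff _ _).1 le_rfl 0

variable {A : Matrix (Fin n) (Fin n) ℝ} {B : Matrix (Fin n) (Fin m) ℝ}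
  {u : Fin T → Fin m → ℝ} {x : Fin (T + 1) → Fin n → ℝ}

lemma Consistent.Xplus_mulVec (hcons : Consistent A B u x) (v : Fin T → ℝ) :
    Xplus x *ᵥ v = A *ᵥ (Xminus x *ᵥ v) + B *ᵥ (Uminus u *ᵥ v) := by
  have hX : Xplus x = A * Xminus x + B * Uminus u := by
    ext i t
    simpa [Xplus, Xminus, Uminus, Matrix.mul_apply, Matrix.mulVec, dotProduct] using
      congrFun (hcons t) i
  rw [hX, Matrix.add_mulVec, Matrix.mulVec_mulVec, Matrix.mulVec_mulVec]

lemma Consistent.mem_of_invariant (hcons : Consistent A B u x) {W : Submodule ℝ (Fin n → ℝ)}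
    (hA : ∀ w ∈ W, A *ᵥ w ∈ W) (hB : colSpan B ≤ W) (h0 : x 0 ∈ W) (t : Fin (T + 1)) :
    x t ∈ W := by
  induction t using Fin.induction with
  | zero => exact h0
  | succ t ih => rw [hcons t]; exact add_mem (hA _ ih) (hB ⟨u t, rfl⟩)

lemma Consistent.mem_Rspace (hcons : Consistent A B u x) (t : Fin (T + 1)) :
    x t ∈ Rspace A (augCol B (x 0)) := by
  obtain ⟨hB, h0⟩ := (colSpan_augCol_le_iff B (x 0) _).1 (colSpan_le_Rspace A _)
  exact hcons.mem_of_invariant (fun _ => mulVec_mem_Rspace A _) hB h0 t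

lemma Consistent.colSpan_Xminus_le_Rspace (hcons : Consistent A B u x) :
    colSpan (Xminus x) ≤ Rspace A (augCol B (x 0)) :=
  (colSpan_le_iff _ _).2 fun t => hcons.mem_Rspace t.castSucc

lemma Consistent.colSpan_Xplus_le_Rspace (hcons : Consistent A B u x) :
    colSpan (Xplus x) ≤ Rspace A (augCol B (x 0)) :=
  (colSpan_le_iff _ _).2 fun t => hcons.mem_Rspace t.succ

lemma Consistent.mulVec_add_mulVec_mem_colSpan_Xminus (hcons : Consistent A B u x)
    (h : colSpan (stacked (Xminus x) (Uminus u)) = (colSpan (Xminus x)).comap (projN n m))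
    (hplus : colSpan (Xplus x) ≤ colSpan (Xminus x)) :
    ∀ ξ ∈ colSpan (Xminus x), ∀ η, A *ᵥ ξ + B *ᵥ η ∈ colSpan (Xminus x) := by
  intro ξ hξ η
  obtain ⟨v, rfl, rfl⟩ := exists_mulVec_eq_of_colSpan_stacked_eq h hξ η
  exact hcons.Xplus_mulVec v ▸ hplus ⟨v, rfl⟩

end Data

theorem stmt_13_general {n m T : ℕ} (hm : 0 < m)
    (A : Matrix (Fin n) (Fin n) ℝ) (B : Matrix (Fin n) (Fin m) ℝ)
    (u : Fin T → Fin m → ℝ) (x : Fin (T + 1) → Fin n → ℝ)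
    (hcons : Consistent A B u x) :
    (colSpan (stacked (Xminus x) (Uminus u)) =
        (Rspace A (augCol B (x 0))).comap (projN n m)) ↔
      (colSpan (stacked (Xminus x) (Uminus u)) =
          (colSpan (Xminus x)).comap (projN n m) ∧
        colSpan (Xplus x) ≤ colSpan (Xminus x)) := by
  have hprojN : Function.Surjective (projN n m) :=
    LinearMap.funLeft_surjective_of_injective ℝ ℝ _ Sum.inl_injective
  constructor
  · intro h
    have hXR : colSpan (Xminus x) = Rspace A (augCol B (x 0)) := by
      rw [← map_projN_colSpan_stacked (Xminus x) (Uminus u), h,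
        Submodule.map_comap_eq_of_surjective hprojN]
    exact ⟨hXR ▸ h, hXR ▸ hcons.colSpan_Xplus_le_Rspace⟩
  · rintro ⟨h, hplus⟩
    have hstep := hcons.mulVec_add_mulVec_mem_colSpan_Xminus h hplus
    have hRX : Rspace A (augCol B (x 0)) ≤ colSpan (Xminus x) := by
      refine Rspace_le A _ (fun ξ hξ => by simpa using hstep ξ hξ 0) ?_
      refine (colSpan_augCol_le_iff B (x 0) _).2
        ⟨?_, x_zero_mem_colSpan_Xminus x (pos_of_colSpan_stacked_eq hm h)⟩
      rintro _ ⟨η, rfl⟩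
      simpa using hstep 0 (zero_mem _) η
    rw [h, le_antisymm hcons.colSpan_Xminus_le_Rspace hRX]

/-- For data consistent with `(A,B)`, the conditions
`im [X₋; U₋] = R(A,[B x(0)]) × ℝ^m` and
(`im [X₋; U₋] = im X₋ × ℝ^m` and `im X₊ ⊆ im X₋`) are equivalent. -/
theorem stmt_13 {n m T : ℕ} (hn : 0 < n) (hm : 0 < m)
    (A : Matrix (Fin n) (Fin n) ℝ) (B : Matrix (Fin n) (Fin m) ℝ)
    (u : Fin T → Fin m → ℝ) (x : Fin (T + 1) → Fin n → ℝ)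
    (hcons : Consistent A B u x) :
    (colSpan (stacked (Xminus x) (Uminus u)) =
        (Rspace A (augCol B (x 0))).comap (projN n m)) ↔
      (colSpan (stacked (Xminus x) (Uminus u)) =
          (colSpan (Xminus x)).comap (projN n m) ∧
        colSpan (Xplus x) ≤ colSpan (Xminus x)) :=
  stmt_13_general hm A B u x hcons
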